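/- arXiv:1409.0321 — 5 statements merged into one kernel-verified Lean document; each statement's English description precedes it below -/
import Mathlib

section
/- For every bounded linear operator A on a complex Hilbert space H and every real r ≥ 1, one has w(A)^{2r} ≤ (1/2)(w(A²)^r + ‖A‖^{2r}), where w denotes the numerical radius. -/
open scoped ComplexConjugate

variable {H : Type*} [NormedAddCommGroup H] [InnerProductSpace ℂ H] [CompleteSpace H]

/-- The numerical radius of a bounded operator. -/
noncomputable def numRadius (A : H →L[ℂ] H) : ℝ :=
  sSup {t : ℝ | ∃ x : H, ‖x‖ = 1 ∧ t = ‖(inner ℂ (A x) x : ℂ)‖}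

/-!
For a unit vector `x`, rotate `⟪A x, x⟫` onto the positive real axis by a unimodular `c`; then
`2 ‖⟪A x, x⟫‖ = ⟪c • A x + c̄ • A† x, x⟫ ≤ ‖c • A x + c̄ • A† x‖`. Expanding the square of the
right side, the two squares are at most `‖A‖ ^ 2` and the cross term is `2 Re (c̄ ^ 2 ⟪A² x, x⟫)`,
at most `2 w(A²)`. Hence `w(A) ^ 2 ≤ (w(A²) + ‖A‖ ^ 2) / 2`, and convexity of `t ↦ t ^ r` on
`[0, ∞)` for `r ≥ 1` raises this to the power `r`.
-/

open scoped InnerProductSpace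
open ContinuousLinearMap

section

omit [CompleteSpace H]

lemma numRadius_nonneg (A : H →L[ℂ] H) : 0 ≤ numRadius A :=
  Real.sSup_nonneg (by rintro t ⟨x, -, rfl⟩; positivity)

lemma norm_inner_le_numRadius (A : H →L[ℂ] H) {x : H} (hx : ‖x‖ = 1) :
    ‖⟪A x, x⟫_ℂ‖ ≤ numRadius A := by
  refine le_csSup ⟨‖A‖, ?_⟩ ⟨x, hx, rfl⟩
  rintro t ⟨y, hy, rfl⟩
  calc ‖⟪A y, y⟫_ℂ‖ ≤ ‖A y‖ * ‖y‖ := norm_inner_le_norm _ _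
    _ ≤ ‖A‖ * ‖y‖ * ‖y‖ := by gcongr; exact A.le_opNorm y
    _ = ‖A‖ := by rw [hy, mul_one, mul_one]

end

lemma norm_smul_add_smul_adjoint_sq_le (A : H →L[ℂ] H) {x : H} (hx : ‖x‖ = 1) {c : ℂ}
    (hc : ‖c‖ = 1) :
    ‖c • A x + conj c • adjoint A x‖ ^ 2 ≤ 2 * (numRadius (A * A) + ‖A‖ ^ 2) := by
  have hu : ‖c • A x‖ ≤ ‖A‖ := by simpa [norm_smul, hc, hx] using A.le_opNorm x
  have hv : ‖conj c • adjoint A x‖ ≤ ‖A‖ := by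
    simpa [norm_smul, hc, hx] using (adjoint A).le_opNorm x
  have hcross : RCLike.re ⟪c • A x, conj c • adjoint A x⟫_ℂ ≤ numRadius (A * A) :=
    calc RCLike.re ⟪c • A x, conj c • adjoint A x⟫_ℂ
        ≤ ‖⟪c • A x, conj c • adjoint A x⟫_ℂ‖ := RCLike.re_le_norm _
      _ = ‖⟪(A * A) x, x⟫_ℂ‖ := by
        rw [inner_smul_left, inner_smul_right, adjoint_inner_right]; simp [hc]
      _ ≤ numRadius (A * A) := norm_inner_le_numRadius _ hx
  rw [norm_add_sq (𝕜 := ℂ)]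
  nlinarith [pow_le_pow_left₀ (norm_nonneg _) hu 2, pow_le_pow_left₀ (norm_nonneg _) hv 2]

lemma norm_inner_self_sq_le (A : H →L[ℂ] H) {x : H} (hx : ‖x‖ = 1) :
    ‖⟪A x, x⟫_ℂ‖ ^ 2 ≤ (numRadius (A * A) + ‖A‖ ^ 2) / 2 := by
  set a := ⟪A x, x⟫_ℂ with ha_def
  set c : ℂ := Complex.exp (a.arg * Complex.I)
  have hc : ‖c‖ = 1 := Complex.norm_exp_ofReal_mul_I _
  have hrot : ⟪c • A x + conj c • adjoint A x, x⟫_ℂ = 2 * ‖a‖ := by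
    have ha : a = ‖a‖ * c := (Complex.norm_mul_exp_arg_mul_I a).symm
    rw [inner_add_left, inner_smul_left, inner_smul_left, adjoint_inner_left,
      ← inner_conj_symm x (A x), ← ha_def]
    conv_lhs => rw [ha, map_mul, Complex.conj_ofReal, Complex.conj_conj]
    have hcc : conj c * c = 1 := by simp [Complex.conj_mul', hc]
    linear_combination (2 * (‖a‖ : ℂ)) * hcc
  have hle : 2 * ‖a‖ ≤ ‖c • A x + conj c • adjoint A x‖ := by
    simpa [hrot, hx] using norm_inner_le_norm (𝕜 := ℂ) (c • A x + conj c • adjoint A x) x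
  nlinarith [norm_smul_add_smul_adjoint_sq_le A hx hc, norm_nonneg a]

lemma rpow_add_div_two_le {u v p : ℝ} (hu : 0 ≤ u) (hv : 0 ≤ v) (hp : 1 ≤ p) :
    ((u + v) / 2) ^ p ≤ (u ^ p + v ^ p) / 2 := by
  have h := (convexOn_rpow hp).2 hu hv (by norm_num : (0 : ℝ) ≤ 1 / 2)
    (by norm_num : (0 : ℝ) ≤ 1 / 2) (by norm_num)
  simp only [smul_eq_mul] at h
  rw [show (u + v) / 2 = 1 / 2 * u + 1 / 2 * v by ring]
  linarith

lemma numRadius_sq_le (A : H →L[ℂ] H) :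
    numRadius A ^ 2 ≤ (numRadius (A * A) + ‖A‖ ^ 2) / 2 := by
  have hM : 0 ≤ (numRadius (A * A) + ‖A‖ ^ 2) / 2 := by
    have := numRadius_nonneg (A * A)
    positivity
  refine (Real.le_sqrt (numRadius_nonneg A) hM).1 (Real.sSup_le ?_ (Real.sqrt_nonneg _))
  rintro t ⟨x, hx, rfl⟩
  exact Real.le_sqrt_of_sq_le (norm_inner_self_sq_le A hx)

theorem statement0 (A : H →L[ℂ] H) (r : ℝ) (hr : 1 ≤ r) :
    numRadius A ^ (2 * r) ≤ (1 / 2) * (numRadius (A * A) ^ r + ‖A‖ ^ (2 * r)) := by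
  have hsq {t : ℝ} (ht : 0 ≤ t) : t ^ (2 * r) = (t ^ 2) ^ r := by
    rw [Real.rpow_mul ht, Real.rpow_two]
  calc numRadius A ^ (2 * r) = (numRadius A ^ 2) ^ r := hsq (numRadius_nonneg A)
    _ ≤ ((numRadius (A * A) + ‖A‖ ^ 2) / 2) ^ r :=
        Real.rpow_le_rpow (sq_nonneg _) (numRadius_sq_le A) (zero_le_one.trans hr)
    _ ≤ (numRadius (A * A) ^ r + (‖A‖ ^ 2) ^ r) / 2 :=
        rpow_add_div_two_le (numRadius_nonneg _) (sq_nonneg _) hr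
    _ = (1 / 2) * (numRadius (A * A) ^ r + ‖A‖ ^ (2 * r)) := by
        rw [hsq (norm_nonneg A)]; ring
end

section
/- For every bounded operator A on a complex Hilbert space, every 0 ≤ α ≤ 1, and all vectors x, y: |⟨Ax, y⟩|² ≤ ⟨|A|^{2α} x, x⟩ · ⟨|A*|^{2(1-α)} y, y⟩, where |A| = (A*A)^{1/2}. -/
/-!
For continuous `f > 0` put `Φ = f(A*A)^{1/2}` and `W = A Φ⁻¹`. Then `A = W Φ`, and Cauchy–Schwarz
gives `|⟨Ax, y⟩|² ≤ ⟨f(A*A) x, x⟩ ⟨W W* y, y⟩`. The intertwining relation `A h(A*A) = h(AA*) A`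
(true for polynomials, hence for continuous `h` by Weierstrass) turns `W W*` into
`(AA*) f(AA*)⁻¹`, which is below `g(AA*)` as soon as `t ≤ f t * g t`. Since `|A|^{2α} = (A*A)^α`,
the choice `f t = (t + ε)^α`, `g t = t^{1-α}` proves the inequality with `(A*A + ε)^α` in the first
factor, and `ε → 0` by continuity of the functional calculus.
-/

open scoped ComplexConjugate

variable {H : Type*} [NormedAddCommGroup H] [InnerProductSpace ℂ H] [CompleteSpace H]

open scoped NNReal InnerProductSpace
open Filter Topology RCLike Polynomial Set

section InnerProductSpace

variable {𝕜 E : Type*} [RCLike 𝕜] [NormedAddCommGroup E] [InnerProductSpace 𝕜 E]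

namespace ContinuousLinearMap

theorem re_inner_apply_le_of_le {S T : E →L[𝕜] E} (h : S ≤ T) (x : E) :
    re ⟪S x, x⟫_𝕜 ≤ re ⟪T x, x⟫_𝕜 := by
  have := h.re_inner_nonneg_left x
  rwa [sub_apply, inner_sub_left, map_sub, sub_nonneg] at this

theorem re_inner_apply_nonneg {T : E →L[𝕜] E} (h : 0 ≤ T) (x : E) : 0 ≤ re ⟪T x, x⟫_𝕜 := by
  simpa using re_inner_apply_le_of_le h x

variable [CompleteSpace E]

theorem re_inner_star_mul_self_apply (T : E →L[𝕜] E) (x : E) :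
    re ⟪(star T * T) x, x⟫_𝕜 = ‖T x‖ ^ 2 := by
  rw [star_eq_adjoint, mul_def, apply_norm_sq_eq_inner_adjoint_left]

theorem norm_inner_sq_le_of_eq_mul {A W Φ : E →L[𝕜] E} (h : A = W * Φ) (x y : E) :
    ‖⟪A x, y⟫_𝕜‖ ^ 2 ≤ re ⟪(star Φ * Φ) x, x⟫_𝕜 * re ⟪(W * star W) y, y⟫_𝕜 := by
  have hxy : ⟪A x, y⟫_𝕜 = ⟪Φ x, star W y⟫_𝕜 := by
    rw [h, mul_apply_eq_comp, star_eq_adjoint, adjoint_inner_right]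
  have hW : W * star W = star (star W) * star W := by rw [star_star]
  rw [hxy, hW, re_inner_star_mul_self_apply, re_inner_star_mul_self_apply, ← mul_pow]
  gcongr
  exact norm_inner_le_norm _ _

end ContinuousLinearMap

end InnerProductSpace

theorem Continuous.tendstoUniformlyOn_of_isCompact {α β γ : Type*} [UniformSpace α]
    [WeaklyLocallyCompactSpace α] [UniformSpace β] [UniformSpace γ] {F : α → β → γ}
    (hF : Continuous ↿F) {K : Set β} (hK : IsCompact K) (x : α) :
    TendstoUniformlyOn F (F x) (𝓝 x) K := by
  have := isCompact_iff_compactSpace.mp hK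
  rw [tendstoUniformlyOn_iff_tendstoUniformly_comp_coe]
  exact Continuous.tendstoUniformly (fun a (k : K) => F a k)
    (hF.comp (continuous_fst.prodMk (continuous_subtype_val.comp continuous_snd))) x

theorem exists_tendstoUniformlyOn_polynomial_eval {a b : ℝ} {f : ℝ → ℝ}
    (hf : ContinuousOn f (Icc a b)) :
    ∃ p : ℕ → ℝ[X], TendstoUniformlyOn (fun n x => (p n).eval x) f atTop (Icc a b) := by
  choose p hp using fun n : ℕ =>
    exists_polynomial_near_of_continuousOn a b f hf (1 / (n + 1)) Nat.one_div_pos_of_nat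
  refine ⟨p, Metric.tendstoUniformlyOn_iff.2 fun ε hε => ?_⟩
  obtain ⟨N, hN⟩ := exists_nat_one_div_lt hε
  filter_upwards [eventually_ge_atTop N] with n hn x hx
  rw [dist_comm, Real.dist_eq]
  calc |(p n).eval x - f x| < 1 / (n + 1) := hp n x hx
    _ ≤ 1 / (N + 1) := by gcongr
    _ < ε := hN

theorem SemiconjBy.aeval {R A : Type*} [CommSemiring R] [Semiring A] [Algebra R A] {a b c : A}
    (h : SemiconjBy a b c) (p : R[X]) : SemiconjBy a (aeval b p) (aeval c p) := by
  induction p using Polynomial.induction_on' with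
  | add p q hp hq => simpa only [map_add] using hp.add_right hq
  | monomial n r =>
    simpa only [aeval_monomial] using
      (Algebra.commute_algebraMap_right r a).semiconjBy.mul_right (h.pow_right n)

theorem NNReal.le_rpow_mul_rpow_one_sub {s t : ℝ≥0} (hst : s ≤ t) {p : ℝ} (hp : 0 ≤ p) :
    s ≤ t ^ p * s ^ (1 - p) :=
  calc s = s ^ p * s ^ (1 - p) := by
        rw [← rpow_add' (by norm_num), add_sub_cancel, rpow_one]
    _ ≤ t ^ p * s ^ (1 - p) := by gcongr

section CStarAlgebra

variable {A : Type*} [CStarAlgebra A]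

theorem mul_cfc_star_mul_self (a : A) {f : ℝ → ℝ} (hf : Continuous f) :
    a * cfc f (star a * a) = cfc f (a * star a) * a := by
  nontriviality A
  set M := ‖star a * a‖
  have hspec : ∀ b : A, ‖b‖ = M → spectrum ℝ b ⊆ Icc (-M) M := fun b hb t ht => by
    rw [← hb]; exact abs_le.1 (spectrum.norm_le_norm_of_mem ht)
  obtain ⟨p, hp⟩ := exists_tendstoUniformlyOn_polynomial_eval (a := -M) (b := M) hf.continuousOn
  have hlim : ∀ b : A, ‖b‖ = M →
      Tendsto (fun n => cfc (fun x => (p n).eval x) b) atTop (𝓝 (cfc f b)) := fun b hb =>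
    tendsto_cfc_fun (hp.mono (hspec b hb)) (.of_forall fun n => (p n).continuousOn)
  have hsemi : SemiconjBy a (star a * a) (a * star a) := (mul_assoc _ _ _).symm
  have hnorm : ‖a * star a‖ = M := by
    rw [CStarRing.norm_self_mul_star, ← CStarRing.norm_star_mul_self]
  have hpoly : ∀ n, a * cfc (fun x => (p n).eval x) (star a * a)
      = cfc (fun x => (p n).eval x) (a * star a) * a := fun n => by
    rw [cfc_polynomial (p n) (star a * a), cfc_polynomial (p n) (a * star a)]
    exact (hsemi.aeval (p n)).eq
  exact tendsto_nhds_unique (((hlim _ rfl).const_mul a).congr hpoly) ((hlim _ hnorm).mul_const a)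

variable [PartialOrder A] [StarOrderedRing A]

theorem mul_cfc_star_mul_self_nnreal (a : A) {f : ℝ≥0 → ℝ≥0} (hf : Continuous f) :
    a * cfc f (star a * a) = cfc f (a * star a) * a := by
  rw [cfc_nnreal_eq_real f _ (star_mul_self_nonneg a),
    cfc_nnreal_eq_real f _ (mul_star_self_nonneg a)]
  exact mul_cfc_star_mul_self a (by fun_prop)

theorem CFC.sqrt_rpow_two_mul {a : A} (ha : 0 ≤ a) {p : ℝ} (hp : 0 ≤ p) :
    sqrt a ^ (2 * p) = a ^ p := by
  rw [sqrt_eq_rpow, rpow_rpow_of_exponent_nonneg a _ _ (by norm_num) (by positivity)]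
  congr 1
  ring

theorem tendsto_cfc_add_rpow (a : A) {p : ℝ} (hp : 0 ≤ p) :
    Tendsto (fun ε : ℝ≥0 => cfc (fun t => (t + ε) ^ p) a) (𝓝 0)
      (𝓝 (cfc (fun t : ℝ≥0 => t ^ p) a)) := by
  have hF : Continuous fun q : ℝ≥0 × ℝ≥0 => (q.2 + q.1) ^ p := by fun_prop
  simpa only [add_zero] using tendsto_cfc_fun (a := a)
    (hF.tendstoUniformlyOn_of_isCompact (F := fun ε t : ℝ≥0 => (t + ε) ^ p)
      (ContinuousFunctionalCalculus.isCompact_spectrum a) 0)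
    (.of_forall fun ε => by fun_prop)

end CStarAlgebra

namespace ContinuousLinearMap

theorem norm_inner_sq_le_of_le_mul (A : H →L[ℂ] H) {f g : ℝ≥0 → ℝ≥0} (hf : Continuous f)
    (hg : Continuous g) (hf_pos : ∀ t, 0 < f t) (hfg : ∀ t, t ≤ f t * g t) (x y : H) :
    ‖⟪A x, y⟫_ℂ‖ ^ 2 ≤
      re ⟪cfc f (star A * A) x, x⟫_ℂ * re ⟪cfc g (A * star A) y, y⟫_ℂ := by
  have hsqrt : Continuous fun t => NNReal.sqrt (f t) := by fun_prop
  have hsqrt_ne : ∀ t, NNReal.sqrt (f t) ≠ 0 := fun t => (NNReal.sqrt_pos.2 (hf_pos t)).ne'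
  have hinv : Continuous fun t => (NNReal.sqrt (f t))⁻¹ := hsqrt.inv₀ hsqrt_ne
  set Φ := cfc (fun t => NNReal.sqrt (f t)) (star A * A)
  set Ψ := cfc (fun t => (NNReal.sqrt (f t))⁻¹) (star A * A)
  have hΨΦ : Ψ * Φ = 1 := by
    rw [← cfc_mul _ _ _ hinv.continuousOn hsqrt.continuousOn, ← cfc_const_one ℝ≥0 (star A * A)]
    exact cfc_congr fun t _ => inv_mul_cancel₀ (hsqrt_ne t)
  have hΦΦ : star Φ * Φ = cfc f (star A * A) := by
    rw [(cfc_predicate _ _ : 0 ≤ Φ).isSelfAdjoint.star_eq, ← cfc_mul ..]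
    exact cfc_congr fun t _ => NNReal.mul_self_sqrt (f t)
  have hWW : A * Ψ * star (A * Ψ) ≤ cfc g (A * star A) := by
    have hf_inv : Continuous fun t => (f t)⁻¹ := hf.inv₀ fun t => (hf_pos t).ne'
    have hΨΨ : Ψ * Ψ = cfc (fun t => (f t)⁻¹) (star A * A) := by
      rw [← cfc_mul _ _ _ hinv.continuousOn hinv.continuousOn]
      exact cfc_congr fun t _ => by rw [← mul_inv, NNReal.mul_self_sqrt]
    calc A * Ψ * star (A * Ψ) = A * (Ψ * Ψ) * star A := by
          rw [star_mul, (cfc_predicate _ _ : 0 ≤ Ψ).isSelfAdjoint.star_eq]; noncomm_ring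
      _ = cfc (fun s => (f s)⁻¹ * s) (A * star A) := by
          rw [hΨΨ, mul_cfc_star_mul_self_nnreal A hf_inv, mul_assoc,
            cfc_mul (fun s => (f s)⁻¹) (fun s => s) _ hf_inv.continuousOn,
            cfc_id' ℝ≥0 (A * star A)]
      _ ≤ cfc g (A * star A) :=
          cfc_mono (fun s _ => (inv_mul_le_iff₀ (hf_pos s)).2 (hfg s)) (by fun_prop)
  calc ‖⟪A x, y⟫_ℂ‖ ^ 2
      ≤ re ⟪(star Φ * Φ) x, x⟫_ℂ * re ⟪(A * Ψ * star (A * Ψ)) y, y⟫_ℂ :=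
        norm_inner_sq_le_of_eq_mul (by rw [mul_assoc, hΨΦ, mul_one]) x y
    _ ≤ re ⟪cfc f (star A * A) x, x⟫_ℂ * re ⟪cfc g (A * star A) y, y⟫_ℂ := by
        rw [hΦΦ]
        exact mul_le_mul_of_nonneg_left (re_inner_apply_le_of_le hWW y)
          (re_inner_apply_nonneg (cfc_predicate _ _) x)

end ContinuousLinearMap

theorem statement4 (A : H →L[ℂ] H) (α : ℝ) (hα0 : 0 ≤ α) (hα1 : α ≤ 1) (x y : H) :
    ‖(inner ℂ (A x) y : ℂ)‖ ^ 2 ≤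
      ((inner ℂ ((CFC.sqrt (star A * A) ^ (2 * α)) x) x : ℂ)).re *
        ((inner ℂ ((CFC.sqrt (A * star A) ^ (2 * (1 - α))) y) y : ℂ)).re := by
  have hβ : 0 ≤ 1 - α := sub_nonneg.2 hα1
  rw [CFC.sqrt_rpow_two_mul (star_mul_self_nonneg A) hα0,
    CFC.sqrt_rpow_two_mul (mul_star_self_nonneg A) hβ, CFC.rpow_def, CFC.rpow_def]
  set Y := re ⟪cfc (fun t : ℝ≥0 => t ^ (1 - α)) (A * star A) y, y⟫_ℂ
  have hbound : ∀ ε : ℝ≥0, 0 < ε →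
      ‖⟪A x, y⟫_ℂ‖ ^ 2 ≤ re ⟪cfc (fun t => (t + ε) ^ α) (star A * A) x, x⟫_ℂ * Y :=
    fun ε hε => A.norm_inner_sq_le_of_le_mul (by fun_prop) (NNReal.continuous_rpow_const hβ)
      (fun t => NNReal.rpow_pos (by positivity))
      (fun t => NNReal.le_rpow_mul_rpow_one_sub le_self_add hα0) x y
  have hcont : Continuous fun T : H →L[ℂ] H => re ⟪T x, x⟫_ℂ := by fun_prop
  have hlim := (((hcont.tendsto _).comp (tendsto_cfc_add_rpow (star A * A) hα0)).mul_const
    Y).mono_left (nhdsWithin_le_nhds (s := Ioi 0))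
  exact ge_of_tendsto hlim (eventually_nhdsWithin_of_forall hbound)
end

section
/- For all vectors a, b, e in a complex Hilbert space with ‖e‖ = 1: ‖a‖·‖b‖ ≥ |⟨a,b⟩ − ⟨a,e⟩⟨e,b⟩| + |⟨a,e⟩⟨e,b⟩| ≥ |⟨a,b⟩| (Dragomir's refinement of the Cauchy–Schwarz inequality). -/
/-!
Let `a' = a - ⟪e, a⟫ e` and `b' = b - ⟪e, b⟫ e` be the components orthogonal to the unit
vector `e`. Then `⟪a', b'⟫ = ⟪a, b⟫ - ⟪a, e⟫⟪e, b⟫`, `‖a'‖² + |⟪e, a⟫|² = ‖a‖²` and likewise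
for `b`, so Cauchy–Schwarz in `H` followed by Cauchy–Schwarz in `ℝ²` for the vectors
`(‖a'‖, |⟪a, e⟫|)` and `(‖b'‖, |⟪e, b⟫|)` gives the upper bound. The lower bound is the
triangle inequality.
-/

open scoped InnerProductSpace

theorem mul_add_mul_le_mul_of_sq_add_sq_le {p q x y A B : ℝ} (hA : 0 ≤ A) (hB : 0 ≤ B)
    (hpx : p ^ 2 + x ^ 2 ≤ A ^ 2) (hqy : q ^ 2 + y ^ 2 ≤ B ^ 2) : p * q + x * y ≤ A * B := by
  have hcs : (p * q + x * y) ^ 2 ≤ (p ^ 2 + x ^ 2) * (q ^ 2 + y ^ 2) := by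
    nlinarith [sq_nonneg (p * y - x * q)]
  have hsq : (p * q + x * y) ^ 2 ≤ (A * B) ^ 2 := by
    rw [mul_pow]
    exact hcs.trans (mul_le_mul hpx hqy (by positivity) (sq_nonneg A))
  exact (abs_le_of_sq_le_sq' hsq (mul_nonneg hA hB)).2

section UnitVector

variable {𝕜 E : Type*} [RCLike 𝕜] [NormedAddCommGroup E] [InnerProductSpace 𝕜 E] {e : E}

theorem inner_sub_inner_smul_unit (he : ‖e‖ = 1) (a b : E) :
    ⟪a - ⟪e, a⟫_𝕜 • e, b - ⟪e, b⟫_𝕜 • e⟫_𝕜 = ⟪a, b⟫_𝕜 - ⟪a, e⟫_𝕜 * ⟪e, b⟫_𝕜 := by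
  have hee : ⟪e, e⟫_𝕜 = 1 := by simp [inner_self_eq_norm_sq_to_K, he]
  simp only [inner_sub_left, inner_sub_right, inner_smul_left, inner_smul_right, hee,
    inner_conj_symm]
  ring

theorem norm_sub_inner_smul_unit_sq_add (he : ‖e‖ = 1) (a : E) :
    ‖a - ⟪e, a⟫_𝕜 • e‖ ^ 2 + ‖⟪e, a⟫_𝕜‖ ^ 2 = ‖a‖ ^ 2 := by
  have h := inner_sub_inner_smul_unit (𝕜 := 𝕜) he a a
  rw [inner_self_eq_norm_sq_to_K, inner_self_eq_norm_sq_to_K, ← inner_conj_symm a e,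
    RCLike.conj_mul] at h
  norm_cast at h
  linarith

theorem norm_inner_sub_add_norm_inner_mul_le (he : ‖e‖ = 1) (a b : E) :
    ‖⟪a, b⟫_𝕜 - ⟪a, e⟫_𝕜 * ⟪e, b⟫_𝕜‖ + ‖⟪a, e⟫_𝕜 * ⟪e, b⟫_𝕜‖ ≤ ‖a‖ * ‖b‖ := by
  have ha := norm_sub_inner_smul_unit_sq_add (𝕜 := 𝕜) he a
  have hb := norm_sub_inner_smul_unit_sq_add (𝕜 := 𝕜) he b
  rw [norm_inner_symm e a] at ha
  calc ‖⟪a, b⟫_𝕜 - ⟪a, e⟫_𝕜 * ⟪e, b⟫_𝕜‖ + ‖⟪a, e⟫_𝕜 * ⟪e, b⟫_𝕜‖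
      ≤ ‖a - ⟪e, a⟫_𝕜 • e‖ * ‖b - ⟪e, b⟫_𝕜 • e‖ + ‖⟪a, e⟫_𝕜‖ * ‖⟪e, b⟫_𝕜‖ := by
        rw [← inner_sub_inner_smul_unit he, norm_mul]
        gcongr
        exact norm_inner_le_norm _ _
    _ ≤ ‖a‖ * ‖b‖ :=
        mul_add_mul_le_mul_of_sq_add_sq_le (norm_nonneg a) (norm_nonneg b) ha.le hb.le

end UnitVector

theorem statement5 {H : Type*} [NormedAddCommGroup H] [InnerProductSpace ℂ H]
    (a b e : H) (he : ‖e‖ = 1) :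
    ‖(inner ℂ a b : ℂ)‖ ≤ ‖(inner ℂ a b : ℂ) - inner ℂ a e * inner ℂ e b‖ + ‖(inner ℂ a e : ℂ) * inner ℂ e b‖ ∧
      ‖(inner ℂ a b : ℂ) - inner ℂ a e * inner ℂ e b‖ + ‖(inner ℂ a e : ℂ) * inner ℂ e b‖ ≤ ‖a‖ * ‖b‖ :=
  ⟨norm_le_norm_sub_add _ _, norm_inner_sub_add_norm_inner_mul_le he a b⟩
end

section
/- For any bounded operator A on a complex Hilbert space, any unit vector x, and any r ≥ 1: |⟨Ax, x⟩|^{2r} ≤ (1/2)(‖Ax‖^r · ‖A*x‖^r + |⟨A²x, x⟩|^r). -/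
open scoped ComplexConjugate

variable {H : Type*} [NormedAddCommGroup H] [InnerProductSpace ℂ H] [CompleteSpace H]

/-! Buzano's inequality `|⟪a, x⟫⟪x, b⟫| ≤ (‖a‖‖b‖ + |⟪a, b⟫|) / 2` for a unit vector `x`, applied to
`a = A x`, `b = A* x`, gives `|⟪A x, x⟫|² ≤ (‖A x‖‖A* x‖ + |⟪A² x, x⟫|) / 2`; raising this to the
power `r` and using the convexity of `t ↦ t ^ r` on `[0, ∞)` gives the claim. -/

open scoped InnerProductSpace

theorem Real.add_div_two_rpow_le {a b r : ℝ} (ha : 0 ≤ a) (hb : 0 ≤ b) (hr : 1 ≤ r) :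
    ((a + b) / 2) ^ r ≤ (a ^ r + b ^ r) / 2 := by
  have h := (convexOn_rpow hr).2 (Set.mem_Ici.2 ha) (Set.mem_Ici.2 hb)
    (by norm_num : (0 : ℝ) ≤ 1 / 2) (by norm_num : (0 : ℝ) ≤ 1 / 2) (by norm_num)
  simp only [smul_eq_mul] at h
  rw [show (a + b) / 2 = 1 / 2 * a + 1 / 2 * b by ring]
  linarith

section Buzano

variable {𝕜 E : Type*} [RCLike 𝕜] [NormedAddCommGroup E] [InnerProductSpace 𝕜 E]

theorem norm_inner_mul_inner_le_of_norm_eq_one {x : E} (hx : ‖x‖ = 1) (a b : E) :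
    ‖⟪a, x⟫_𝕜 * ⟪x, b⟫_𝕜‖ ≤ (‖a‖ * ‖b‖ + ‖⟪a, b⟫_𝕜‖) / 2 := by
  set K := 𝕜 ∙ x
  -- the reflection in the line through `x` is `b ↦ 2⟪x, b⟫x - b`, an isometry
  have hsplit : 2 * (⟪a, x⟫_𝕜 * ⟪x, b⟫_𝕜) = ⟪a, b⟫_𝕜 + ⟪a, K.reflection b⟫_𝕜 := by
    rw [K.reflection_apply, Submodule.starProjection_unit_singleton 𝕜 hx, inner_sub_right,
      ← Nat.cast_smul_eq_nsmul 𝕜, inner_smul_right, inner_smul_right]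
    push_cast
    ring
  have hrefl : ‖⟪a, K.reflection b⟫_𝕜‖ ≤ ‖a‖ * ‖b‖ :=
    (norm_inner_le_norm a _).trans_eq (by rw [LinearIsometryEquiv.norm_map])
  have htri := norm_add_le ⟪a, b⟫_𝕜 ⟪a, K.reflection b⟫_𝕜
  rw [← hsplit, norm_mul, RCLike.norm_ofNat] at htri
  linarith

theorem ContinuousLinearMap.norm_inner_apply_self_sq_le [CompleteSpace E] (A : E →L[𝕜] E)
    {x : E} (hx : ‖x‖ = 1) :
    ‖⟪A x, x⟫_𝕜‖ ^ 2 ≤ (‖A x‖ * ‖(star A) x‖ + ‖⟪(A * A) x, x⟫_𝕜‖) / 2 := by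
  have h_adj : ⟪x, (star A) x⟫_𝕜 = ⟪A x, x⟫_𝕜 := by
    rw [star_eq_adjoint, adjoint_inner_right]
  have h_sq : ⟪A x, (star A) x⟫_𝕜 = ⟪(A * A) x, x⟫_𝕜 := by
    rw [star_eq_adjoint, adjoint_inner_right]
    rfl
  have h := norm_inner_mul_inner_le_of_norm_eq_one (𝕜 := 𝕜) hx (A x) ((star A) x)
  rwa [h_adj, h_sq, norm_mul, ← sq] at h

end Buzano

theorem statement6 (A : H →L[ℂ] H) (x : H) (hx : ‖x‖ = 1) (r : ℝ) (hr : 1 ≤ r) :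
    ‖(inner ℂ (A x) x : ℂ)‖ ^ (2 * r) ≤
      (1 / 2) * (‖A x‖ ^ r * ‖(star A) x‖ ^ r + ‖(inner ℂ ((A * A) x) x : ℂ)‖ ^ r) := by
  calc ‖⟪A x, x⟫_ℂ‖ ^ (2 * r) = (‖⟪A x, x⟫_ℂ‖ ^ 2) ^ r := by
        rw [Real.rpow_mul (norm_nonneg _), Real.rpow_two]
    _ ≤ ((‖A x‖ * ‖(star A) x‖ + ‖⟪(A * A) x, x⟫_ℂ‖) / 2) ^ r :=
        Real.rpow_le_rpow (by positivity) (A.norm_inner_apply_self_sq_le hx) (by linarith)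
    _ ≤ ((‖A x‖ * ‖(star A) x‖) ^ r + ‖⟪(A * A) x, x⟫_ℂ‖ ^ r) / 2 :=
        Real.add_div_two_rpow_le (by positivity) (norm_nonneg _) hr
    _ = _ := by rw [Real.mul_rpow (norm_nonneg _) (norm_nonneg _)]; ring
end

section
/- Let A be an invertible self-adjoint bounded operator and X a self-adjoint bounded operator on a complex Hilbert space. Then w(X) ≤ w( (A X A^{-1} + A^{-1} X A)/2 ). -/
open scoped ComplexConjugate

variable {H : Type*} [NormedAddCommGroup H] [InnerProductSpace ℂ H] [CompleteSpace H]

/-!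
Write `S = (A X A⁻¹ + A⁻¹ X A) / 2`, `p = A z`, `q = A⁻¹ z`. Self-adjointness of `A` gives
`⟪S z, z⟫ = (⟪X q, p⟫ + ⟪X p, q⟫) / 2 = (⟪X (p + q), p + q⟫ - ⟪X (p - q), p - q⟫) / 4`
and `re ⟪p, q⟫ = ‖z‖²`, so `‖p + q‖² = ‖p - q‖² + 4 ‖z‖²`. Hence for `y = (A + A⁻¹) z`
`|⟪X y, y⟫| ≤ w(X) ‖y‖² - 4 (w(X) - w(S)) ‖z‖²`.
As `A + A⁻¹` is invertible, every `y` is of this form with `‖z‖²` bounded below by a fixed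
multiple of `‖y‖²`, so `w(S) < w(X)` would force `w(X)` strictly below itself.
-/

theorem isUnit_add_invOf_of_isSelfAdjoint {𝔸 : Type*} [CStarAlgebra 𝔸] [PartialOrder 𝔸]
    [StarOrderedRing 𝔸] (a : 𝔸) [Invertible a] (ha : IsSelfAdjoint a) : IsUnit (a + ⅟a) := by
  have h : a + ⅟a = ⅟a * (1 + star a * a) := by
    rw [ha.star_eq, mul_add, mul_one, ← mul_assoc, invOf_mul_self, one_mul, add_comm]
  rw [h]
  exact (isUnit_of_invertible _).mul
    (CStarAlgebra.isUnit_of_le 1 (le_add_of_nonneg_right (star_mul_self_nonneg a)))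

theorem inner_map_add_inner_map_swap {E : Type*} [SeminormedAddCommGroup E]
    [InnerProductSpace ℂ E] (T : E →L[ℂ] E) (u v : E) :
    (inner ℂ (T u) v : ℂ) + inner ℂ (T v) u =
      (2 : ℂ)⁻¹ * (inner ℂ (T (u + v)) (u + v) - inner ℂ (T (u - v)) (u - v)) := by
  simp only [map_add, map_sub, inner_add_left, inner_add_right, inner_sub_left, inner_sub_right]
  ring

namespace numRadius

omit [CompleteSpace H] in
theorem bddAbove (T : H →L[ℂ] H) :
    BddAbove {t : ℝ | ∃ x : H, ‖x‖ = 1 ∧ t = ‖(inner ℂ (T x) x : ℂ)‖} := by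
  refine ⟨‖T‖, ?_⟩
  rintro t ⟨x, hx, rfl⟩
  calc ‖(inner ℂ (T x) x : ℂ)‖ ≤ ‖T x‖ * ‖x‖ := norm_inner_le_norm _ _
    _ ≤ ‖T‖ * ‖x‖ * ‖x‖ := by gcongr; exact T.le_opNorm x
    _ = ‖T‖ := by rw [hx, mul_one, mul_one]

omit [CompleteSpace H] in
theorem norm_inner_le_mul_sq (T : H →L[ℂ] H) (v : H) :
    ‖(inner ℂ (T v) v : ℂ)‖ ≤ numRadius T * ‖v‖ ^ 2 := by
  rcases eq_or_ne v 0 with rfl | hv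
  · simp
  have hv' : ‖v‖ ≠ 0 := norm_ne_zero_iff.mpr hv
  have hunit : ‖(inner ℂ (T ((‖v‖⁻¹ : ℂ) • v)) ((‖v‖⁻¹ : ℂ) • v) : ℂ)‖ ≤ numRadius T :=
    le_csSup (bddAbove T) ⟨_, norm_smul_inv_norm hv, rfl⟩
  rw [map_smul, inner_smul_left, inner_smul_right, norm_mul, norm_mul, RCLike.norm_conj,
    ← Complex.ofReal_inv, Complex.norm_real, Real.norm_eq_abs, abs_inv, abs_norm] at hunit
  calc ‖(inner ℂ (T v) v : ℂ)‖ = ‖v‖⁻¹ * (‖v‖⁻¹ * ‖(inner ℂ (T v) v : ℂ)‖) * ‖v‖ ^ 2 := by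
        field_simp
    _ ≤ numRadius T * ‖v‖ ^ 2 := by gcongr

omit [CompleteSpace H] in
theorem le_of_forall_norm_inner_le [Nontrivial H] (T : H →L[ℂ] H) {r : ℝ}
    (h : ∀ x, ‖(inner ℂ (T x) x : ℂ)‖ ≤ r * ‖x‖ ^ 2) : numRadius T ≤ r := by
  obtain ⟨x, hx⟩ := exists_norm_eq H zero_le_one
  refine csSup_le ⟨_, x, hx, rfl⟩ ?_
  rintro t ⟨x, hx, rfl⟩
  simpa [hx] using h x

end numRadius

section Symmetrization

variable (A X : H →L[ℂ] H) [Invertible A] (hA : IsSelfAdjoint A) (z : H)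
include hA

theorem inner_half_conj_add_conj_inv_apply :
    (inner ℂ (((2 : ℂ)⁻¹ • (A * X * ⅟A + ⅟A * X * A)) z) z : ℂ) =
      (4 : ℂ)⁻¹ * (inner ℂ (X (A z + ⅟A z)) (A z + ⅟A z) -
        inner ℂ (X (A z - ⅟A z)) (A z - ⅟A z)) := by
  have h₁ : (inner ℂ ((A * X * ⅟A) z) z : ℂ) = inner ℂ (X (⅟A z)) (A z) :=
    hA.isSymmetric _ _
  have h₂ : (inner ℂ ((⅟A * X * A) z) z : ℂ) = inner ℂ (X (A z)) (⅟A z) :=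
    (hA.invOf A).isSymmetric _ _
  rw [smul_apply, add_apply, inner_smul_left, inner_add_left, h₁, h₂, add_comm,
    inner_map_add_inner_map_swap]
  simp only [map_inv₀, Complex.conj_ofNat]
  ring

theorem norm_add_invOf_apply_sq :
    ‖A z + ⅟A z‖ ^ 2 = ‖A z - ⅟A z‖ ^ 2 + 4 * ‖z‖ ^ 2 := by
  have hre : RCLike.re (inner ℂ (A z) (⅟A z) : ℂ) = ‖z‖ ^ 2 := by
    have h : (inner ℂ (A z) (⅟A z) : ℂ) = inner ℂ z (A (⅟A z)) := hA.isSymmetric _ _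
    rw [h, ← mul_apply_eq_comp, mul_invOf_self, one_apply_eq_self, inner_self_eq_norm_sq]
  rw [norm_add_sq (𝕜 := ℂ), norm_sub_sq (𝕜 := ℂ), hre]
  ring

theorem norm_inner_add_invOf_apply_le :
    ‖(inner ℂ (X (A z + ⅟A z)) (A z + ⅟A z) : ℂ)‖ ≤
      numRadius X * ‖A z + ⅟A z‖ ^ 2 -
        4 * (numRadius X - numRadius ((2 : ℂ)⁻¹ • (A * X * ⅟A + ⅟A * X * A))) * ‖z‖ ^ 2 := by
  set S := (2 : ℂ)⁻¹ • (A * X * ⅟A + ⅟A * X * A)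
  have hsplit : (inner ℂ (X (A z + ⅟A z)) (A z + ⅟A z) : ℂ) =
      4 * inner ℂ (S z) z + inner ℂ (X (A z - ⅟A z)) (A z - ⅟A z) := by
    rw [inner_half_conj_add_conj_inv_apply A X hA]
    ring
  calc ‖(inner ℂ (X (A z + ⅟A z)) (A z + ⅟A z) : ℂ)‖
      ≤ 4 * ‖(inner ℂ (S z) z : ℂ)‖ + ‖(inner ℂ (X (A z - ⅟A z)) (A z - ⅟A z) : ℂ)‖ := by
        rw [hsplit]
        refine (norm_add_le _ _).trans_eq ?_
        rw [norm_mul, RCLike.norm_ofNat]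
    _ ≤ 4 * (numRadius S * ‖z‖ ^ 2) + numRadius X * ‖A z - ⅟A z‖ ^ 2 := by
        gcongr <;> exact numRadius.norm_inner_le_mul_sq _ _
    _ = _ := by
        rw [norm_add_invOf_apply_sq A hA]
        ring

end Symmetrization

theorem statement18_general (A X : H →L[ℂ] H) [Invertible A]
    (hA : IsSelfAdjoint A) :
    numRadius X ≤ numRadius ((2 : ℂ)⁻¹ • (A * X * ⅟A + ⅟A * X * A)) := by
  rcases subsingleton_or_nontrivial H with _ | _
  · exact (congrArg numRadius (Subsingleton.elim X _)).le
  set S := (2 : ℂ)⁻¹ • (A * X * ⅟A + ⅟A * X * A)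
  have hB := ContinuousLinearMap.isUnit_iff_bijective.mp (isUnit_add_invOf_of_isSelfAdjoint A hA)
  set κ := 4 / (‖A + ⅟A‖ ^ 2 + 1)
  by_contra! hlt
  have hκ : 0 < κ := by positivity
  have hself : numRadius X ≤ numRadius X - κ * (numRadius X - numRadius S) := by
    refine numRadius.le_of_forall_norm_inner_le X fun y ↦ ?_
    obtain ⟨z, rfl⟩ := hB.surjective y
    have hz : ‖(A + ⅟A) z‖ ^ 2 ≤ (‖A + ⅟A‖ ^ 2 + 1) * ‖z‖ ^ 2 := by
      nlinarith [(A + ⅟A).le_opNorm z, norm_nonneg ((A + ⅟A) z), sq_nonneg ‖z‖]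
    have hκz : κ * ‖(A + ⅟A) z‖ ^ 2 ≤ 4 * ‖z‖ ^ 2 := by
      rw [div_mul_eq_mul_div, div_le_iff₀ (by positivity)]
      nlinarith
    rw [add_apply] at hκz ⊢
    calc _ ≤ numRadius X * ‖A z + ⅟A z‖ ^ 2 - 4 * (numRadius X - numRadius S) * ‖z‖ ^ 2 :=
          norm_inner_add_invOf_apply_le A X hA z
      _ ≤ _ := by nlinarith [mul_le_mul_of_nonneg_left hκz (sub_nonneg.mpr hlt.le)]
  nlinarith [sub_pos.mpr hlt]

theorem statement18 (A X : H →L[ℂ] H) [Invertible A]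
    (hA : IsSelfAdjoint A) (hX : IsSelfAdjoint X) :
    numRadius X ≤ numRadius ((2 : ℂ)⁻¹ • (A * X * ⅟A + ⅟A * X * A)) :=
  statement18_general A X hA
end
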